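/- Let A, B, C, D be finite-valued random variables. If I(A; D | B, C) = 0 and I(A; C) ≥ I(A; C | B), then I(A; C) ≥ I(A; C | (B, D)). -/

import Mathlib

open scoped BigOperators

noncomputable section

/-- Probability that the random variable `X` takes the value `a`,
with respect to the probability mass function `p` on the finite sample space `Ω`. -/
def prob {Ω : Type*} [Fintype Ω] {α : Type*} [DecidableEq α]
    (p : Ω → ℝ) (X : Ω → α) (a : α) : ℝ :=
  ∑ ω, if X ω = a then p ω else 0

/-- Shannon entropy (base 2) of the random variable `X`. -/
def ent {Ω : Type*} [Fintype Ω] {α : Type*} [Fintype α] [DecidableEq α]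
    (p : Ω → ℝ) (X : Ω → α) : ℝ :=
  -∑ a, prob p X a * Real.logb 2 (prob p X a)

/-- Conditional entropy `H(X|Y)`. -/
def condEnt {Ω : Type*} [Fintype Ω] {α β : Type*} [Fintype α] [DecidableEq α]
    [Fintype β] [DecidableEq β] (p : Ω → ℝ) (X : Ω → α) (Y : Ω → β) : ℝ :=
  ent p (fun ω => (X ω, Y ω)) - ent p Y

/-- Mutual information `I(X;Y)`. -/
def mi {Ω : Type*} [Fintype Ω] {α β : Type*} [Fintype α] [DecidableEq α]
    [Fintype β] [DecidableEq β] (p : Ω → ℝ) (X : Ω → α) (Y : Ω → β) : ℝ :=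
  ent p X + ent p Y - ent p (fun ω => (X ω, Y ω))

/-- Conditional mutual information `I(X;Y|Z)`. -/
def cmi {Ω : Type*} [Fintype Ω] {α β γ : Type*} [Fintype α] [DecidableEq α]
    [Fintype β] [DecidableEq β] [Fintype γ] [DecidableEq γ]
    (p : Ω → ℝ) (X : Ω → α) (Y : Ω → β) (Z : Ω → γ) : ℝ :=
  ent p (fun ω => (X ω, Z ω)) + ent p (fun ω => (Y ω, Z ω))
    - ent p (fun ω => (X ω, Y ω, Z ω)) - ent p Z

/-!
Expanding `I(A; (C, D) | B)` by the chain rule in the two orders gives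
`I(A; C | B, D) = I(A; C | B) + I(A; D | B, C) - I(A; D | B) ≤ I(A; C | B) ≤ I(A; C)`,
because `I(A; D | B, C) = 0` and `I(A; D | B) ≥ 0`. The non-negativity of conditional mutual
information `I(X; Y | Z)` is Gibbs' inequality for the joint law `q(x, y, z)` against
`r(x, y, z) = q(x, z) q(y, z) / q(z)`, which has the same total mass.
-/

theorem Real.sum_mul_log_div_le_sum_sub {ι : Type*} [Fintype ι] {q r : ι → ℝ}
    (hq : ∀ i, 0 ≤ q i) (hr : ∀ i, 0 ≤ r i) (hqr : ∀ i, 0 < q i → 0 < r i) :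
    ∑ i, q i * Real.log (r i / q i) ≤ ∑ i, r i - ∑ i, q i := by
  rw [← Finset.sum_sub_distrib]
  refine Finset.sum_le_sum fun i _ => ?_
  rcases (hq i).eq_or_lt with h | h
  · simp [← h, hr i]
  · calc q i * Real.log (r i / q i) ≤ q i * (r i / q i - 1) :=
          mul_le_mul_of_nonneg_left (Real.log_le_sub_one_of_pos (div_pos (hqr i h) h)) h.le
      _ = r i - q i := by field_simp

section

variable {Ω : Type*} [Fintype Ω] (p : Ω → ℝ)
variable {α β γ δ : Type*} [DecidableEq α] [DecidableEq β] [DecidableEq γ] [DecidableEq δ]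

theorem prob_nonneg (hp : ∀ ω, 0 ≤ p ω) (X : Ω → α) (a : α) : 0 ≤ prob p X a :=
  Finset.sum_nonneg fun ω _ => by split_ifs <;> simp [hp ω]

theorem prob_le_prob_comp (hp : ∀ ω, 0 ≤ p ω) (X : Ω → α) (g : α → β) (a : α) :
    prob p X a ≤ prob p (fun ω => g (X ω)) (g a) :=
  Finset.sum_le_sum fun ω _ => by
    by_cases h : X ω = a
    · simp [h]
    · split_ifs <;> simp [hp ω]

def condIndepLaw (X : Ω → α) (Y : Ω → β) (Z : Ω → γ) (v : α × β × γ) : ℝ :=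
  prob p (fun ω => (X ω, Z ω)) (v.1, v.2.2) * prob p (fun ω => (Y ω, Z ω)) (v.2.1, v.2.2)
    / prob p Z v.2.2

theorem prob_marginals_pos (hp : ∀ ω, 0 ≤ p ω) (X : Ω → α) (Y : Ω → β) (Z : Ω → γ)
    {v : α × β × γ} (hv : 0 < prob p (fun ω => (X ω, Y ω, Z ω)) v) :
    0 < prob p (fun ω => (X ω, Z ω)) (v.1, v.2.2) ∧
      0 < prob p (fun ω => (Y ω, Z ω)) (v.2.1, v.2.2) ∧ 0 < prob p Z v.2.2 :=
  ⟨hv.trans_le (prob_le_prob_comp p hp _ (fun v => (v.1, v.2.2)) v),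
    hv.trans_le (prob_le_prob_comp p hp _ (fun v => (v.2.1, v.2.2)) v),
    hv.trans_le (prob_le_prob_comp p hp _ (fun v => v.2.2) v)⟩

theorem condIndepLaw_nonneg (hp : ∀ ω, 0 ≤ p ω) (X : Ω → α) (Y : Ω → β) (Z : Ω → γ)
    (v : α × β × γ) : 0 ≤ condIndepLaw p X Y Z v :=
  div_nonneg (mul_nonneg (prob_nonneg p hp _ _) (prob_nonneg p hp _ _)) (prob_nonneg p hp _ _)

theorem condIndepLaw_pos (hp : ∀ ω, 0 ≤ p ω) (X : Ω → α) (Y : Ω → β) (Z : Ω → γ)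
    {v : α × β × γ} (hv : 0 < prob p (fun ω => (X ω, Y ω, Z ω)) v) :
    0 < condIndepLaw p X Y Z v :=
  have ⟨h₁, h₂, h₃⟩ := prob_marginals_pos p hp X Y Z hv
  div_pos (mul_pos h₁ h₂) h₃

variable [Fintype α]

theorem sum_prob_mul (X : Ω → α) (f : α → ℝ) :
    ∑ a, prob p X a * f a = ∑ ω, p ω * f (X ω) := by
  simp only [prob, Finset.sum_mul, ite_mul, zero_mul]
  rw [Finset.sum_comm]
  simp

theorem sum_prob (X : Ω → α) : ∑ a, prob p X a = ∑ ω, p ω := by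
  simpa using sum_prob_mul p X 1

theorem sum_prob_pair (X : Ω → α) (Z : Ω → β) (z : β) :
    ∑ x, prob p (fun ω => (X ω, Z ω)) (x, z) = prob p Z z := by
  simp only [prob, Prod.mk.injEq]
  rw [Finset.sum_comm]
  simp [ite_and]

variable [Fintype β] [Fintype γ] [Fintype δ]

theorem ent_eq_neg_sum (X : Ω → α) :
    ent p X = -∑ ω, p ω * Real.logb 2 (prob p X (X ω)) := by
  rw [ent, sum_prob_mul]

theorem ent_comp_eq_neg_sum (X : Ω → α) (g : α → β) :
    ent p (fun ω => g (X ω)) =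
      -∑ a, prob p X a * Real.logb 2 (prob p (fun ω => g (X ω)) (g a)) := by
  rw [ent_eq_neg_sum, sum_prob_mul]

theorem ent_eq_of_forall_eq_iff {X : Ω → α} {Y : Ω → β}
    (h : ∀ ω ω', X ω' = X ω ↔ Y ω' = Y ω) : ent p X = ent p Y := by
  simp only [ent_eq_neg_sum, prob, h]

theorem sum_condIndepLaw (X : Ω → α) (Y : Ω → β) (Z : Ω → γ) :
    ∑ v, condIndepLaw p X Y Z v = ∑ ω, p ω :=
  calc ∑ v, condIndepLaw p X Y Z v
      = ∑ z, (∑ x, prob p (fun ω => (X ω, Z ω)) (x, z))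
          * (∑ y, prob p (fun ω => (Y ω, Z ω)) (y, z)) / prob p Z z := by
        simp only [condIndepLaw, Fintype.sum_prod_type_right, Finset.sum_mul, Finset.mul_sum,
          Finset.sum_div]
    _ = ∑ z, prob p Z z := by
        simp only [sum_prob_pair]
        exact Finset.sum_congr rfl fun z _ => mul_self_div_self _
    _ = ∑ ω, p ω := sum_prob p Z

theorem cmi_eq_neg_sum_mul_log_div (hp : ∀ ω, 0 ≤ p ω) (X : Ω → α) (Y : Ω → β) (Z : Ω → γ) :
    cmi p X Y Z = -(∑ v, prob p (fun ω => (X ω, Y ω, Z ω)) v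
      * Real.log (condIndepLaw p X Y Z v / prob p (fun ω => (X ω, Y ω, Z ω)) v)) / Real.log 2 := by
  set V := fun ω => (X ω, Y ω, Z ω)
  set q := prob p V
  have hterm : ∀ v, q v * (Real.logb 2 (q v) + Real.logb 2 (prob p Z v.2.2)
      - Real.logb 2 (prob p (fun ω => (X ω, Z ω)) (v.1, v.2.2))
      - Real.logb 2 (prob p (fun ω => (Y ω, Z ω)) (v.2.1, v.2.2)))
      = -(q v * Real.log (condIndepLaw p X Y Z v / q v)) / Real.log 2 := by
    intro v
    rcases (prob_nonneg p hp V v).eq_or_lt with h | h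
    · simp [q, ← h]
    obtain ⟨h₁, h₂, h₃⟩ := prob_marginals_pos p hp X Y Z h
    simp only [condIndepLaw, Real.logb]
    rw [Real.log_div (div_pos (mul_pos h₁ h₂) h₃).ne' h.ne',
      Real.log_div (mul_pos h₁ h₂).ne' h₃.ne', Real.log_mul h₁.ne' h₂.ne']
    ring
  calc cmi p X Y Z = ∑ v, q v * (Real.logb 2 (q v) + Real.logb 2 (prob p Z v.2.2)
        - Real.logb 2 (prob p (fun ω => (X ω, Z ω)) (v.1, v.2.2))
        - Real.logb 2 (prob p (fun ω => (Y ω, Z ω)) (v.2.1, v.2.2))) := by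
        rw [cmi, ent_comp_eq_neg_sum p V fun v => (v.1, v.2.2),
          ent_comp_eq_neg_sum p V fun v => (v.2.1, v.2.2),
          ent_comp_eq_neg_sum p V fun v => v.2.2, ent]
        simp only [mul_add, mul_sub, Finset.sum_add_distrib, Finset.sum_sub_distrib]
        ring
    _ = _ := by
        rw [Finset.sum_congr rfl fun v _ => hterm v, ← Finset.sum_div, Finset.sum_neg_distrib]

theorem cmi_nonneg (hp : ∀ ω, 0 ≤ p ω) (X : Ω → α) (Y : Ω → β) (Z : Ω → γ) :
    0 ≤ cmi p X Y Z := by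
  have gibbs := Real.sum_mul_log_div_le_sum_sub (prob_nonneg p hp _)
    (condIndepLaw_nonneg p hp X Y Z) fun _ => condIndepLaw_pos p hp X Y Z
  rw [sum_condIndepLaw, sum_prob, sub_self] at gibbs
  rw [cmi_eq_neg_sum_mul_log_div p hp]
  exact div_nonneg (neg_nonneg.mpr gibbs) (Real.log_nonneg one_le_two)

theorem cmi_prod_comm (X : Ω → α) (Y : Ω → β) (W : Ω → δ) (Z : Ω → γ) :
    cmi p X (fun ω => (Y ω, W ω)) Z = cmi p X (fun ω => (W ω, Y ω)) Z := by
  have e₁ : ent p (fun ω => ((Y ω, W ω), Z ω)) = ent p (fun ω => ((W ω, Y ω), Z ω)) :=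
    ent_eq_of_forall_eq_iff p fun _ _ => by simp only [Prod.mk.injEq]; tauto
  have e₂ : ent p (fun ω => (X ω, (Y ω, W ω), Z ω)) = ent p (fun ω => (X ω, (W ω, Y ω), Z ω)) :=
    ent_eq_of_forall_eq_iff p fun _ _ => by simp only [Prod.mk.injEq]; tauto
  rw [cmi, cmi, e₁, e₂]

theorem cmi_prod_eq_add (X : Ω → α) (Y : Ω → β) (W : Ω → δ) (Z : Ω → γ) :
    cmi p X (fun ω => (Y ω, W ω)) Z = cmi p X W Z + cmi p X Y (fun ω => (Z ω, W ω)) := by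
  have e₁ : ent p (fun ω => ((Y ω, W ω), Z ω)) = ent p (fun ω => (Y ω, Z ω, W ω)) :=
    ent_eq_of_forall_eq_iff p fun _ _ => by simp only [Prod.mk.injEq]; tauto
  have e₂ : ent p (fun ω => (X ω, (Y ω, W ω), Z ω)) = ent p (fun ω => (X ω, Y ω, Z ω, W ω)) :=
    ent_eq_of_forall_eq_iff p fun _ _ => by simp only [Prod.mk.injEq]; tauto
  have e₃ : ent p (fun ω => (X ω, W ω, Z ω)) = ent p (fun ω => (X ω, Z ω, W ω)) :=
    ent_eq_of_forall_eq_iff p fun _ _ => by simp only [Prod.mk.injEq]; tauto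
  have e₄ : ent p (fun ω => (W ω, Z ω)) = ent p (fun ω => (Z ω, W ω)) :=
    ent_eq_of_forall_eq_iff p fun _ _ => by simp only [Prod.mk.injEq]; tauto
  simp only [cmi, e₁, e₂, e₃, e₄]
  ring

end

theorem stmt3_general {Ω : Type*} [Fintype Ω] {α β γ δ : Type*}
    [Fintype α] [DecidableEq α] [Fintype β] [DecidableEq β]
    [Fintype γ] [DecidableEq γ] [Fintype δ] [DecidableEq δ]
    (p : Ω → ℝ) (hp : ∀ ω, 0 ≤ p ω)
    (A : Ω → α) (B : Ω → β) (C : Ω → γ) (D : Ω → δ)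
    (h1 : cmi p A D (fun ω => (B ω, C ω)) = 0)
    (h2 : mi p A C ≥ cmi p A C B) :
    mi p A C ≥ cmi p A C (fun ω => (B ω, D ω)) := by
  have hchain : cmi p A D B + cmi p A C (fun ω => (B ω, D ω))
      = cmi p A C B + cmi p A D (fun ω => (B ω, C ω)) := by
    rw [← cmi_prod_eq_add, ← cmi_prod_eq_add, cmi_prod_comm]
  linarith [cmi_nonneg p hp A D B]

theorem stmt3 {Ω : Type*} [Fintype Ω] {α β γ δ : Type*}
    [Fintype α] [DecidableEq α] [Fintype β] [DecidableEq β]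
    [Fintype γ] [DecidableEq γ] [Fintype δ] [DecidableEq δ]
    (p : Ω → ℝ) (hp : ∀ ω, 0 ≤ p ω) (hsum : ∑ ω, p ω = 1)
    (A : Ω → α) (B : Ω → β) (C : Ω → γ) (D : Ω → δ)
    (h1 : cmi p A D (fun ω => (B ω, C ω)) = 0)
    (h2 : mi p A C ≥ cmi p A C B) :
    mi p A C ≥ cmi p A C (fun ω => (B ω, D ω)) :=
  stmt3_general p hp A B C D h1 h2
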